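/- arXiv:1306.5809 — 2 statements merged into one kernel-verified Lean document; each statement's English description precedes it below -/
import Mathlib

section
/- Suppose Tr_{r/q}(a) = 0 and b ∈ C_j^{(d_2, r)} for some 0 ≤ j ≤ d_2 − 1. Then the Hamming weight of c(a, b) equals (q−1)n_2/q − ((q−1)d_2/(q N_2)) · η_j^{(d_2, r)} (equality after casting the weight into ℂ). -/
/-
Since `Tr(a) = 0`, the weight is `n₂` minus the number of `t` with `Tr_{r/q}(b g₂^t) = 0`, and
orthogonality of the additive characters `y ↦ ψ(y x)` of `F_q` turns `q` times this count into
`n₂ + Σ_t Σ_{y ∈ F_q^*} ψ(y b g₂^t)`. The products `y g₂^t` run over the subgroup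
`F_q^* ⟨g₂⟩ = ⟨α^{N₀}⟩ ⟨α^{N₂}⟩ = ⟨α^{d₂}⟩`, each element being hit
`(q-1) n₂ / |⟨α^{d₂}⟩| = (q-1) d₂ / N₂` times, and `b ⟨α^{d₂}⟩ = C_j^{(d₂,r)}`, so the double sum
is `(q-1) d₂ / N₂ · η_j^{(d₂,r)}`.
-/

/-- The canonical additive character `ψ(x) = e^{2πi·Tr_{F/F_p}(x)/p}` of a finite field `F`
of characteristic `p`. -/
noncomputable def psi (p : ℕ) (F : Type*) [Field F] [Fintype F] [Algebra (ZMod p) F]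
    (x : F) : ℂ :=
  Complex.exp (2 * (Real.pi : ℂ) * Complex.I * ((Algebra.trace (ZMod p) F x).val : ℂ) / (p : ℂ))

/-- The cyclotomic class `C_i^{(N,r)} = α^i ⟨α^N⟩` in a finite field. -/
def cClass (F : Type*) [Field F] (α : Fˣ) (N i : ℕ) : Set F :=
  {x | ∃ t : ℕ, x = ((α ^ (i + N * t) : Fˣ) : F)}

/-- The Gauss period `η_i^{(N,r)} = Σ_{x ∈ C_i^{(N,r)}} ψ(x)`. -/
noncomputable def gaussPeriod (p : ℕ) (F : Type*) [Field F] [Fintype F] [Algebra (ZMod p) F]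
    (α : Fˣ) (N i : ℕ) : ℂ :=
  ∑ t ∈ Finset.range ((Fintype.card F - 1) / N), psi p F ((α ^ (i + N * t) : Fˣ) : F)

open Finset Subgroup

section AdditiveCharacter

variable (p : ℕ) [Fact p.Prime] {F : Type*} [Field F] [Fintype F] [Algebra (ZMod p) F]

lemma psi_eq_stdAddChar_trace (x : F) :
    psi p F x = ZMod.stdAddChar (Algebra.trace (ZMod p) F x) := by
  rw [ZMod.stdAddChar_apply, ZMod.toCircle_apply]
  rfl

lemma sum_psi_algebraMap_mul (K : Type*) [Field K] [Fintype K] [DecidableEq K] [Algebra K F]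
    (x : F) :
    ∑ y : K, psi p F (algebraMap K F y * x)
      = if Algebra.trace K F x = 0 then (Fintype.card K : ℂ) else 0 := by
  have : CharP F p := charP_of_injective_algebraMap' (ZMod p) p
  have : CharP K p := (algebraMap K F).charP (algebraMap K F).injective p
  let : Algebra (ZMod p) K := ZMod.algebra K p
  have : IsScalarTower (ZMod p) K F := IsScalarTower.of_algebraMap_eq' (Subsingleton.elim _ _)
  let χ : AddChar K ℂ :=
    ZMod.stdAddChar.compAddMonoidHom (Algebra.trace (ZMod p) K).toAddMonoidHom
  have hχ : χ.IsPrimitive := by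
    refine AddChar.IsPrimitive.of_ne_one fun h => ?_
    obtain ⟨y, hy⟩ := Algebra.trace_surjective (ZMod p) K 1
    have h1 : ZMod.stdAddChar (1 : ZMod p) = ZMod.stdAddChar (0 : ZMod p) := by
      rw [AddChar.map_zero_eq_one, ← hy]
      exact DFunLike.congr_fun h y
    exact one_ne_zero (ZMod.injective_stdAddChar h1)
  have hpsi : ∀ y : K, psi p F (algebraMap K F y * x) = χ.mulShift (Algebra.trace K F x) y := by
    intro y
    rw [psi_eq_stdAddChar_trace, ← Algebra.trace_trace (S := K), ← Algebra.smul_def,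
      LinearMap.map_smul, smul_eq_mul, mul_comm]
    rfl
  simp_rw [hpsi]
  rw [AddChar.sum_eq_ite]
  refine if_congr ?_ rfl rfl
  rw [show (0 : AddChar K ℂ) = χ.mulShift 0 from (AddChar.mulShift_zero χ).symm]
  exact (AddChar.to_mulShift_inj_of_isPrimitive hχ).eq_iff

lemma card_mul_ite_trace_ne_zero (K : Type*) [Field K] [Fintype K] [DecidableEq K] [Algebra K F]
    (x : F) :
    (Fintype.card K : ℂ) * (if Algebra.trace K F x ≠ 0 then 1 else 0)
      = Fintype.card K - 1 - ∑ y : Kˣ, psi p F (algebraMap K F y * x) := by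
  have hsplit := Fintype.sum_eq_add_sum_subtype_ne (fun y : K => psi p F (algebraMap K F y * x)) 0
  rw [sum_psi_algebraMap_mul, map_zero, zero_mul, psi_eq_stdAddChar_trace, map_zero,
    AddChar.map_zero_eq_one,
    ← Fintype.sum_equiv unitsEquivNeZero (fun y : Kˣ => psi p F (algebraMap K F y * x)) _
      fun _ => rfl] at hsplit
  by_cases h : Algebra.trace K F x = 0
  · rw [if_pos h] at hsplit
    rw [if_neg (not_not.mpr h), mul_zero]
    linear_combination -hsplit
  · rw [if_neg h] at hsplit
    rw [if_pos h, mul_one]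
    linear_combination -hsplit

lemma card_mul_hammingNorm_trace {ι : Type*} [Fintype ι] (K : Type*) [Field K] [Fintype K]
    [DecidableEq K] [Algebra K F] (w : ι → F) :
    (Fintype.card K : ℂ) * hammingNorm (fun i => Algebra.trace K F (w i))
      = (Fintype.card K - 1) * Fintype.card ι
        - ∑ i, ∑ y : Kˣ, psi p F (algebraMap K F y * w i) := by
  rw [hammingNorm, natCast_card_filter, mul_sum]
  simp_rw [card_mul_ite_trace_ne_zero p]
  rw [sum_sub_distrib, sum_const, card_univ, nsmul_eq_mul, mul_comm]

end AdditiveCharacter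

lemma MonoidHom.sum_comp_eq_card_ker_smul {G H M : Type*} [Group G] [Fintype G] [Group H]
    [AddCommMonoid M] (φ : G →* H) {S : Subgroup H} (hS : φ.range = S) [Fintype S] (f : H → M) :
    ∑ g, f (φ g) = Nat.card φ.ker • ∑ h : S, f h := by
  classical
  subst hS
  have hfiber (h : φ.range) : Nat.card {g // φ.rangeRestrict g = h} = Nat.card φ.ker := by
    obtain ⟨_, g₀, rfl⟩ := h
    rw [← Nat.card_congr (φ.fiberEquivKer g₀)]
    exact Nat.card_congr (Equiv.subtypeEquivRight fun g => Subtype.ext_iff)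
  rw [← Fintype.sum_fiberwise φ.rangeRestrict, smul_sum]
  refine sum_congr rfl fun h _ => ?_
  rw [← hfiber h, Nat.card_eq_fintype_card, ← card_univ, ← sum_const]
  exact sum_congr rfl fun g _ => congrArg f (congrArg Subtype.val g.2)

lemma zpowers_pow_sup_zpowers_pow {G : Type*} [Group G] (x : G) (a b : ℕ) :
    zpowers (x ^ a) ⊔ zpowers (x ^ b) = zpowers (x ^ Nat.gcd a b) := by
  have hdvd {c : ℕ} (hc : Nat.gcd a b ∣ c) : x ^ c ∈ zpowers (x ^ Nat.gcd a b) := by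
    obtain ⟨k, rfl⟩ := hc
    rw [pow_mul]
    exact pow_mem (mem_zpowers _) k
  have hbezout : x ^ Nat.gcd a b = (x ^ a) ^ Nat.gcdA a b * (x ^ b) ^ Nat.gcdB a b := by
    rw [← zpow_natCast, Nat.gcd_eq_gcd_ab, zpow_add, zpow_mul, zpow_mul, zpow_natCast,
      zpow_natCast]
  apply le_antisymm
  · rw [sup_le_iff, zpowers_le, zpowers_le]
    exact ⟨hdvd (Nat.gcd_dvd_left a b), hdvd (Nat.gcd_dvd_right a b)⟩
  · rw [zpowers_le, hbezout]
    exact mul_mem_sup (zpow_mem (mem_zpowers _) _) (zpow_mem (mem_zpowers _) _)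

lemma eq_zpowers_pow_card_div_card {G : Type*} [Group G] [Finite G] {α : G}
    (hα : ∀ x, x ∈ zpowers α) (S : Subgroup G) :
    S = zpowers (α ^ (Nat.card G / Nat.card S)) := by
  set N := Nat.card G / Nat.card S
  have horder : orderOf α = Nat.card G := orderOf_eq_card_of_forall_mem_zpowers hα
  have hSN : Nat.card S * N = Nat.card G := Nat.mul_div_cancel' (card_subgroup_dvd_card S)
  have hN : N ≠ 0 := by
    rintro hN
    rw [hN, mul_zero] at hSN
    exact Nat.card_pos.ne' hSN.symm
  refine eq_of_le_of_card_ge (fun x hx => ?_) ?_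
  · obtain ⟨k, rfl⟩ := (mem_powers_iff_mem_zpowers.mpr (hα x))
    have hpow : (α ^ k) ^ Nat.card S = 1 :=
      congrArg Subtype.val (pow_card_eq_one' (G := S) (x := ⟨_, hx⟩))
    rw [← pow_mul, ← orderOf_dvd_iff_pow_eq_one, horder, ← hSN, mul_comm k] at hpow
    obtain ⟨l, rfl⟩ := Nat.dvd_of_mul_dvd_mul_left Nat.card_pos hpow
    simp only [pow_mul]
    exact pow_mem (mem_zpowers _) l
  · rw [Nat.card_zpowers, orderOf_pow_of_dvd hN (horder ▸ Dvd.intro_left _ hSN),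
      horder, ← hSN, Nat.mul_div_cancel _ (Nat.pos_of_ne_zero hN)]

lemma card_smul_sum_sum_mul_eq_card_mul_card_smul_sum_sup {G M : Type*} [Group G]
    [AddCommMonoid M] (S T : Subgroup G) [Fintype S] [Fintype T]
    (hST : ∀ s ∈ S, ∀ t ∈ T, Commute s t)
    {U : Subgroup G} (hU : S ⊔ T = U) [Fintype U] (f : G → M) :
    Nat.card U • ∑ s : S, ∑ t : T, f (s * t) = (Nat.card S * Nat.card T) • ∑ h : U, f h := by
  subst hU
  set φ := S.subtype.noncommCoprod T.subtype fun s t => hST s s.2 t t.2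
  have hrange : φ.range = S ⊔ T :=
    (MonoidHom.noncommCoprod_range _ _ _).trans (by rw [range_subtype, range_subtype])
  have hcard : Nat.card φ.ker * Nat.card (S ⊔ T : Subgroup G) = Nat.card S * Nat.card T := by
    rw [← hrange, ← index_ker, card_mul_index, Nat.card_prod]
  have hsum : ∑ s : S, ∑ t : T, f (s * t) = ∑ x, f (φ x) := (Fintype.sum_prod_type' _).symm
  rw [hsum, φ.sum_comp_eq_card_ker_smul hrange, smul_smul, mul_comm, hcard]

lemma sum_zpowers_eq_sum_range {G M : Type*} [Group G] [AddCommMonoid M] {x : G}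
    (hx : IsOfFinOrder x) [Fintype (zpowers x)] (f : G → M) :
    ∑ h : zpowers x, f h = ∑ i ∈ range (orderOf x), f (x ^ i) := by
  rw [sum_range]
  exact (Fintype.sum_equiv (finEquivZPowers hx) _ _ fun i => by rw [finEquivZPowers_apply]).symm

lemma sum_subgroup_mul_left {G M : Type*} [Group G] [AddCommMonoid M] (S : Subgroup G)
    [Fintype S] {c : G} (hc : c ∈ S) (f : G → M) :
    ∑ h : S, f (c * h) = ∑ h : S, f h :=
  Fintype.sum_equiv (Equiv.mulLeft ⟨c, hc⟩) _ _ fun _ => rfl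

lemma natCard_units_eq_card_sub_one (F : Type*) [Field F] [Fintype F] :
    Nat.card Fˣ = Fintype.card F - 1 := by
  rw [Nat.card_units, Nat.card_eq_fintype_card]

lemma orderOf_eq_card_sub_one {F : Type*} [Field F] [Fintype F] {α : Fˣ}
    (hα : ∀ x, x ∈ zpowers α) : orderOf α = Fintype.card F - 1 := by
  rw [orderOf_eq_card_of_forall_mem_zpowers hα, natCard_units_eq_card_sub_one]

lemma orderOf_dvd_card_sub_one {F : Type*} [Field F] [Fintype F] (g : Fˣ) :
    orderOf g ∣ Fintype.card F - 1 :=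
  natCard_units_eq_card_sub_one F ▸ orderOf_dvd_natCard g

lemma orderOf_pow_eq_card_sub_one_div {F : Type*} [Field F] [Fintype F] {α : Fˣ}
    (hα : ∀ x, x ∈ zpowers α) {d : ℕ} (hd : d ∣ Fintype.card F - 1) :
    orderOf (α ^ d) = (Fintype.card F - 1) / d := by
  have hd0 : d ≠ 0 := by
    rintro rfl
    have := Fintype.one_lt_card (α := F)
    rw [zero_dvd_iff] at hd
    omega
  rw [orderOf_pow_of_dvd hd0 ((orderOf_eq_card_sub_one hα).symm ▸ hd), orderOf_eq_card_sub_one hα]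

lemma gaussPeriod_eq_sum_zpowers (p : ℕ) {F : Type*} [Field F] [Fintype F]
    [Algebra (ZMod p) F] {α : Fˣ} (hα : ∀ x, x ∈ zpowers α) {d j : ℕ}
    (hd : d ∣ Fintype.card F - 1) {b : F} (hb : b ∈ cClass F α d j)
    [Fintype (zpowers (α ^ d))] :
    gaussPeriod p F α d j = ∑ h : zpowers (α ^ d), psi p F (b * ((h : Fˣ) : F)) := by
  obtain ⟨t, rfl⟩ := hb
  have hshift (u : Fˣ) :
      ((α ^ (j + d * t) : Fˣ) : F) * u = ((α ^ j : Fˣ) : F) * (((α ^ d) ^ t * u : Fˣ) : F) := by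
    rw [pow_add, pow_mul, Units.val_mul, Units.val_mul, mul_assoc]
  simp_rw [hshift]
  rw [sum_subgroup_mul_left _ (pow_mem (mem_zpowers _) t)
      fun u : Fˣ => psi p F (((α ^ j : Fˣ) : F) * u),
    sum_zpowers_eq_sum_range (isOfFinOrder_of_finite _)
      fun u : Fˣ => psi p F (((α ^ j : Fˣ) : F) * u), orderOf_pow_eq_card_sub_one_div hα hd,
    gaussPeriod]
  simp_rw [pow_add, pow_mul, Units.val_mul]

lemma card_sub_one_div_orderOf_pos {F : Type*} [Field F] [Fintype F] (g : Fˣ) :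
    0 < (Fintype.card F - 1) / orderOf g :=
  Nat.div_pos (Nat.le_of_dvd (Nat.sub_pos_of_lt Fintype.one_lt_card) (orderOf_dvd_card_sub_one g))
    (orderOf_pos g)

lemma range_unitsMap_sup_zpowers_eq {F K : Type*} [Field F] [Fintype F] [Field K] [Fintype K]
    [Algebra K F] {α : Fˣ} (hα : ∀ x, x ∈ zpowers α) (g : Fˣ) {N₀ N₂ : ℕ}
    (hN₀ : N₀ = (Fintype.card F - 1) / (Fintype.card K - 1))
    (hN₂ : N₂ = (Fintype.card F - 1) / orderOf g) :
    (Units.map (algebraMap K F).toMonoidHom).range ⊔ zpowers g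
      = zpowers (α ^ Nat.gcd N₀ N₂) := by
  have hι := Units.map_injective (M := K) (algebraMap K F).injective
  have hS : (Units.map (algebraMap K F).toMonoidHom).range = zpowers (α ^ N₀) := by
    rw [eq_zpowers_pow_card_div_card hα (MonoidHom.range _),
      ← Nat.card_congr (MonoidHom.ofInjective hι).toEquiv, natCard_units_eq_card_sub_one,
      natCard_units_eq_card_sub_one, hN₀]
  have hT : zpowers g = zpowers (α ^ N₂) := by
    rw [eq_zpowers_pow_card_div_card hα (zpowers g), Nat.card_zpowers,
      natCard_units_eq_card_sub_one, hN₂]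
  rw [hS, hT, zpowers_pow_sup_zpowers_pow]

lemma sum_range_unitsMap_sum_zpowers_eq {F K M : Type*} [Field F] [Field K] [Fintype K]
    [DecidableEq K] [Algebra K F] [AddCommMonoid M] (g : Fˣ) (hg : IsOfFinOrder g)
    [Fintype (Units.map (algebraMap K F).toMonoidHom).range] [Fintype (zpowers g)]
    (f : F → M) :
    ∑ s : (Units.map (algebraMap K F).toMonoidHom).range, ∑ t : zpowers g, f ((s * t : Fˣ) : F)
      = ∑ t ∈ range (orderOf g), ∑ y : Kˣ, f (algebraMap K F y * (g : F) ^ t) := by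
  have hι := Units.map_injective (M := K) (algebraMap K F).injective
  rw [sum_comm, sum_zpowers_eq_sum_range hg fun t : Fˣ =>
    ∑ s : (Units.map (algebraMap K F).toMonoidHom).range, f (((s : Fˣ) * t : Fˣ) : F)]
  refine sum_congr rfl fun t _ => (Fintype.sum_equiv (MonoidHom.ofInjective hι).toEquiv _ _
    fun y => ?_).symm
  rw [MulEquiv.toEquiv_eq_coe, MulEquiv.coe_toEquiv, MonoidHom.ofInjective_apply]
  simp

lemma mul_sum_units_mul_pow_eq_mul_sum_zpowers {F K : Type*} [Field F] [Fintype F] [Field K]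
    [Fintype K] [DecidableEq K] [Algebra K F] {α : Fˣ} (hα : ∀ x, x ∈ zpowers α) (g : Fˣ)
    {N₀ N₂ d : ℕ} (hN₀ : N₀ = (Fintype.card F - 1) / (Fintype.card K - 1))
    (hN₂ : N₂ = (Fintype.card F - 1) / orderOf g) (hd : d = Nat.gcd N₀ N₂)
    [Fintype (zpowers (α ^ d))] (f : F → ℂ) :
    (N₂ : ℂ) * ∑ t ∈ range (orderOf g), ∑ y : Kˣ, f (algebraMap K F y * (g : F) ^ t)
      = ((Fintype.card K : ℂ) - 1) * d * ∑ h : zpowers (α ^ d), f ((h : Fˣ) : F) := by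
  classical
  have hι := Units.map_injective (M := K) (algebraMap K F).injective
  have key := card_smul_sum_sum_mul_eq_card_mul_card_smul_sum_sup _ _
    (fun _ _ _ _ => Commute.all _ _) (hd ▸ range_unitsMap_sup_zpowers_eq hα g hN₀ hN₂)
    fun u : Fˣ => f u
  have hN₂n : N₂ * orderOf g = Fintype.card F - 1 := by
    rw [hN₂, Nat.div_mul_cancel (orderOf_dvd_card_sub_one g)]
  obtain ⟨e, he⟩ : d ∣ N₂ := hd ▸ Nat.gcd_dvd_right _ _
  have hcardU : Nat.card (zpowers (α ^ d)) = e * orderOf g := by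
    have hdvd : d ∣ Fintype.card F - 1 := ⟨e * orderOf g, by rw [← hN₂n, he, mul_assoc]⟩
    have hd0 : 0 < d := Nat.pos_of_dvd_of_pos hdvd (Nat.sub_pos_of_lt Fintype.one_lt_card)
    rw [Nat.card_zpowers, orderOf_pow_eq_card_sub_one_div hα hdvd, ← hN₂n, he, mul_assoc,
      Nat.mul_div_cancel_left _ hd0]
  rw [sum_range_unitsMap_sum_zpowers_eq g (isOfFinOrder_of_finite g), hcardU,
    ← Nat.card_congr (MonoidHom.ofInjective hι).toEquiv, natCard_units_eq_card_sub_one,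
    Nat.card_zpowers, nsmul_eq_mul, nsmul_eq_mul, Nat.cast_mul, Nat.cast_mul,
    Nat.cast_sub Fintype.card_pos, Nat.cast_one] at key
  rw [he, Nat.cast_mul]
  apply mul_left_cancel₀ (Nat.cast_ne_zero.mpr (orderOf_pos g).ne' : (orderOf g : ℂ) ≠ 0)
  linear_combination (d : ℂ) * key

theorem stmt9_general (p : ℕ) [Fact p.Prime]
    (K F : Type*) [Field K] [Fintype K] [DecidableEq K] [Field F] [Fintype F]
    [Algebra (ZMod p) F] [Algebra K F]
    (α : Fˣ) (hα : ∀ x : Fˣ, x ∈ Subgroup.zpowers α)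
    (g₂ : Fˣ) (n₂ : ℕ) (h₂ : orderOf g₂ = n₂)
    (N₀ N₂ d₂ : ℕ)
    (hN₀ : N₀ = (Fintype.card F - 1) / (Fintype.card K - 1))
    (hN₂ : N₂ = (Fintype.card F - 1) / n₂)
    (hd₂ : d₂ = Nat.gcd N₀ N₂)
    (a b : F) (j : ℕ)
    (ha : Algebra.trace K F a = 0) (hb : b ∈ cClass F α d₂ j) :
    (hammingNorm (fun t : Fin n₂ =>
        Algebra.trace K F (a + b * (g₂ : F) ^ (t : ℕ))) : ℂ)
      = ((Fintype.card K : ℂ) - 1) * (n₂ : ℂ) / (Fintype.card K : ℂ)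
        - ((Fintype.card K : ℂ) - 1) * (d₂ : ℂ)
            / ((Fintype.card K : ℂ) * (N₂ : ℂ)) * gaussPeriod p F α d₂ j := by
  classical
  subst h₂
  have hd₂u : d₂ ∣ Fintype.card F - 1 :=
    hd₂ ▸ (Nat.gcd_dvd_right _ _).trans (hN₂ ▸ Nat.div_dvd_of_dvd (orderOf_dvd_card_sub_one g₂))
  have hweight :=
    card_mul_hammingNorm_trace p K fun t : Fin (orderOf g₂) => b * (g₂ : F) ^ (t : ℕ)
  have horbit :=
    mul_sum_units_mul_pow_eq_mul_sum_zpowers hα g₂ hN₀ hN₂ hd₂ fun z => psi p F (b * z)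
  rw [← gaussPeriod_eq_sum_zpowers p hα hd₂u hb] at horbit
  simp only [map_add, ha, zero_add]
  rw [Fintype.card_fin, Fin.sum_univ_eq_sum_range
    (fun t => ∑ y : Kˣ, psi p F (algebraMap K F y * (b * (g₂ : F) ^ t)))] at hweight
  simp_rw [mul_left_comm _ b] at hweight
  have hq : (Fintype.card K : ℂ) ≠ 0 := Nat.cast_ne_zero.mpr Fintype.card_ne_zero
  have hN₂0 : (N₂ : ℂ) ≠ 0 := Nat.cast_ne_zero.mpr (hN₂ ▸ (card_sub_one_div_orderOf_pos g₂).ne')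
  field_simp
  linear_combination (N₂ : ℂ) * hweight - horbit

/-- if `Tr_{r/q}(a) = 0` and `b ∈ C_j^{(d₂,r)}`, the weight of `c(a,b)` is
`(q-1)n₂/q - ((q-1)d₂/(qN₂))·η_j^{(d₂,r)}`. -/
theorem stmt9 (p s m : ℕ) [Fact p.Prime] (hs : 0 < s) (hm : 0 < m)
    (K F : Type*) [Field K] [Fintype K] [DecidableEq K] [Field F] [Fintype F]
    [Algebra (ZMod p) F] [Algebra K F]
    (hq : Fintype.card K = p ^ s) (hr : Fintype.card F = Fintype.card K ^ m)
    (α : Fˣ) (hα : ∀ x : Fˣ, x ∈ Subgroup.zpowers α)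
    (g₂ : Fˣ) (n₂ : ℕ) (h₂ : orderOf g₂ = n₂)
    (N₀ N₂ d₂ : ℕ)
    (hN₀ : N₀ = (Fintype.card F - 1) / (Fintype.card K - 1))
    (hN₂ : N₂ = (Fintype.card F - 1) / n₂)
    (hd₂ : d₂ = Nat.gcd N₀ N₂)
    (a b : F) (j : ℕ) (hj : j < d₂)
    (ha : Algebra.trace K F a = 0) (hb : b ∈ cClass F α d₂ j) :
    (hammingNorm (fun t : Fin n₂ =>
        Algebra.trace K F (a + b * (g₂ : F) ^ (t : ℕ))) : ℂ)
      = ((Fintype.card K : ℂ) - 1) * (n₂ : ℂ) / (Fintype.card K : ℂ)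
        - ((Fintype.card K : ℂ) - 1) * (d₂ : ℂ)
            / ((Fintype.card K : ℂ) * (N₂ : ℂ)) * gaussPeriod p F α d₂ j :=
  stmt9_general p K F α hα g₂ n₂ h₂ N₀ N₂ d₂ hN₀ hN₂ hd₂ a b j ha hb
end

section
/- Suppose b ∈ C_j^{(N_2, r)} for some 0 ≤ j ≤ N_2 − 1 and Tr_{r/q}(a) ∈ C_l^{(N_2/d_2, q)} for some 0 ≤ l ≤ N_2/d_2 − 1. Then the Hamming weight of c(a, b) equals (q−1)n_2/q − (1/q) · Σ_{i=0}^{N_2/d_2 − 1} η_{N_0 i + j}^{(N_2, r)} η_{i + l}^{(N_2/d_2, q)} (equality after casting the weight into ℂ; indices read modulo N_2 and modulo N_2/d_2 respectively). -/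
/-!
Write `c_t = Tr_{r/q}(a + b g₂ᵗ)` and `M = N₂/d₂`. Orthogonality of the primitive character `ψ_q`
gives `q · wt(c) = (q - 1) n₂ - Σ_t Σ_{y ∈ F_q^*} ψ_q(y c_t)`, and transitivity of the trace
splits each term as `ψ_q(y Tr(a)) ψ_r(y b g₂ᵗ)`. For `y = β^(i + M u)` the sum over `t` runs over
the coset `y b ⟨g₂⟩ = α^(N₀ i + j) ⟨α^N₂⟩`, because `⟨g₂⟩ = ⟨α^N₂⟩` and `N₂ ∣ N₀ M`; so it equals
`η_{N₀ i + j}^{(N₂,r)}` whatever `u` is, and the remaining sum over `u` is `η_{i + l}^{(M,q)}`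
because `Tr(a) ∈ β^l ⟨β^M⟩`.
-/

open Finset Subgroup

section AddCharacter

variable (p : ℕ) [Fact p.Prime] (F : Type*) [Field F] [Fintype F] [Algebra (ZMod p) F]

noncomputable def psiChar : AddChar F ℂ :=
  ZMod.stdAddChar.compAddMonoidHom (Algebra.trace (ZMod p) F).toAddMonoidHom

lemma psiChar_apply (x : F) : psiChar p F x = psi p F x := by
  simp [psiChar, psi, ZMod.stdAddChar_apply, ZMod.toCircle_apply]

lemma exists_trace_ne_zero : ∃ x : F, Algebra.trace (ZMod p) F x ≠ 0 := by
  have : CharP F p := charP_of_injective_algebraMap (algebraMap (ZMod p) F).injective p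
  obtain rfl : ringChar F = p := ringChar.eq F p
  simpa using FiniteField.trace_to_zmod_nondegenerate F one_ne_zero

lemma isPrimitive_psiChar : (psiChar p F).IsPrimitive := by
  refine AddChar.IsPrimitive.of_ne_one (AddChar.ne_one_iff.2 ?_)
  obtain ⟨x, hx⟩ := exists_trace_ne_zero p F
  refine ⟨x, fun h => hx ?_⟩
  have : NeZero p := ⟨(Fact.out : p.Prime).ne_zero⟩
  rwa [psiChar, AddChar.compAddMonoidHom_apply,
    ← AddChar.map_zero_eq_one (ZMod.stdAddChar (N := p)), ZMod.injective_stdAddChar.eq_iff] at h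

variable {p F} {K : Type*} [Field K] [Fintype K] [Algebra (ZMod p) K] [Algebra K F]

lemma psi_trace (x : F) : psi p K (Algebra.trace K F x) = psi p F x := by
  have : IsScalarTower (ZMod p) K F := .of_algebraMap_eq' (RingHom.ext_zmod _ _)
  simp only [psi, Algebra.trace_trace]

lemma psi_mul_trace_add (y : K) (x z : F) :
    psi p K (y * Algebra.trace K F (x + z))
      = psi p K (y * Algebra.trace K F x) * psi p F (algebraMap K F y * z) := by
  have hz : y * Algebra.trace K F z = Algebra.trace K F (algebraMap K F y * z) := by
    rw [← Algebra.smul_def, map_smul, smul_eq_mul]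
  rw [map_add, mul_add, ← psiChar_apply, AddChar.map_add_eq_mul, psiChar_apply, psiChar_apply,
    hz, psi_trace]

end AddCharacter

lemma sum_units_eq_sum_sub_zero {G₀ M : Type*} [GroupWithZero G₀] [Fintype G₀] [DecidableEq G₀]
    [AddCommGroup M] (f : G₀ → M) : ∑ y : G₀ˣ, f y = ∑ y, f y - f 0 := by
  rw [eq_sub_iff_add_eq, ← sum_erase_add _ _ (mem_univ (0 : G₀)),
    sum_subtype _ (p := (· ≠ 0)) (fun y => by simp) f]
  congr 1
  exact Fintype.sum_equiv unitsEquivNeZero _ _ fun _ => rfl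

section HammingWeight

variable {K : Type*} [Field K] [Fintype K] [DecidableEq K] {ψ : AddChar K ℂ}

lemma sum_units_addChar_mul (hψ : ψ.IsPrimitive) (z : K) :
    ∑ y : Kˣ, ψ (y * z) = if z = 0 then (Fintype.card K : ℂ) - 1 else -1 := by
  rw [sum_units_eq_sum_sub_zero (fun y => ψ (y * z)), AddChar.sum_mulShift z hψ]
  split_ifs <;> simp

lemma card_mul_hammingNorm (hψ : ψ.IsPrimitive) {ι : Type*} [Fintype ι] (c : ι → K) :
    (Fintype.card K : ℂ) * hammingNorm c
      = (Fintype.card K - 1) * Fintype.card ι - ∑ i, ∑ y : Kˣ, ψ (y * c i) := by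
  have hconst : ((Fintype.card K : ℂ) - 1) * Fintype.card ι
      = ∑ _i : ι, ((Fintype.card K : ℂ) - 1) := by
    simp only [sum_const, card_univ, nsmul_eq_mul, mul_comm]
  rw [hconst, hammingNorm, card_filter]
  push_cast
  rw [mul_sum, ← sum_sub_distrib]
  refine sum_congr rfl fun i _ => ?_
  rw [sum_units_addChar_mul hψ]
  split_ifs <;> simp_all

end HammingWeight

section CyclicSums

variable {G M : Type*} [Group G] [AddCommMonoid M]

lemma sum_subgroup_mul_mul_of_mem {H : Subgroup G} [Fintype H] (f : G → M) (c : G) {h : G}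
    (hh : h ∈ H) : ∑ x : H, f (c * h * x) = ∑ x : H, f (c * x) :=
  Fintype.sum_equiv (Equiv.mulLeft ⟨h, hh⟩) _ _ fun x => by simp [mul_assoc]

lemma sum_range_orderOf_pow_eq_sum_subgroup {H : Subgroup G} [Fintype H] {g : G}
    (hg : IsOfFinOrder g) (hH : zpowers g = H) (f : G → M) :
    ∑ t ∈ range (orderOf g), f (g ^ t) = ∑ x : H, f x := by
  subst hH
  rw [← Fin.sum_univ_eq_sum_range (fun t => f (g ^ t))]
  exact Fintype.sum_equiv (finEquivZPowers hg) _ _ fun t => by rw [finEquivZPowers_apply]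

lemma sum_range_mul (f : ℕ → M) (a b : ℕ) :
    ∑ w ∈ range (a * b), f w = ∑ i ∈ range a, ∑ u ∈ range b, f (i + a * u) := by
  induction b with
  | zero => simp
  | succ b ih =>
    rw [mul_add_one, sum_range_add, ih, ← sum_add_distrib]
    exact sum_congr rfl fun i _ => by rw [sum_range_succ, add_comm (a * b)]

lemma sum_eq_sum_range_sum_range_pow [Fintype G] {β : G} (hβ : orderOf β = Nat.card G)
    {a b : ℕ} (hab : orderOf β = a * b) (f : G → M) :
    ∑ y, f y = ∑ i ∈ range a, ∑ u ∈ range b, f (β ^ (i + a * u)) := by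
  have htop : zpowers β = ⊤ := (card_eq_iff_eq_top _).1 (by rw [Nat.card_zpowers, hβ])
  rw [← sum_range_mul (fun w => f (β ^ w)), ← hab,
    sum_range_orderOf_pow_eq_sum_subgroup (isOfFinOrder_of_finite β) rfl]
  exact (Fintype.sum_equiv (Equiv.subtypeUnivEquiv fun y => htop ▸ mem_top y) _ _
    fun _ => rfl).symm

end CyclicSums

lemma zpowers_eq_zpowers_pow_div_orderOf {R : Type*} [CommRing R] [IsDomain R] {α g : Rˣ}
    (hα : orderOf α ≠ 0) (hg : orderOf g ∣ orderOf α) :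
    zpowers g = zpowers (α ^ (orderOf α / orderOf g)) := by
  have : NeZero (orderOf g) := ⟨ne_zero_of_dvd_ne_zero hα hg⟩
  have hprim : IsPrimitiveRoot (α ^ (orderOf α / orderOf g)) (orderOf g) := by
    rw [IsPrimitiveRoot.iff_orderOf, orderOf_pow_of_dvd _ (Nat.div_dvd_of_dvd hg),
      Nat.div_div_self hg hα]
    exact (Nat.div_pos (Nat.le_of_dvd (Nat.pos_of_ne_zero hα) hg) (NeZero.pos _)).ne'
  rw [(IsPrimitiveRoot.orderOf g).zpowers_eq, hprim.zpowers_eq]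

lemma Nat.dvd_mul_div_gcd (a b : ℕ) : b ∣ a * (b / a.gcd b) := by
  rw [← Nat.mul_div_assoc a (Nat.gcd_dvd_right a b)]
  exact Nat.dvd_lcm_right a b

lemma Nat.div_gcd_dvd_of_dvd_mul {a b k : ℕ} (ha : 0 < a) (h : b ∣ a * k) : b / a.gcd b ∣ k := by
  refine Nat.dvd_of_mul_dvd_mul_left ha ?_
  rw [← Nat.mul_div_assoc a (Nat.gcd_dvd_right a b)]
  exact Nat.lcm_dvd (Nat.dvd_mul_right a k) h

section GaussPeriod

variable {p : ℕ} {F : Type*} [Field F] [Fintype F] [DecidableEq F] [Algebra (ZMod p) F]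
  {α : Fˣ} {N : ℕ}

lemma gaussPeriod_eq_sum_zpowers_s10 (hα : orderOf α = Fintype.card F - 1)
    (hN : N ∣ Fintype.card F - 1) (i : ℕ) :
    gaussPeriod p F α N i = ∑ x : zpowers (α ^ N), psi p F ↑(α ^ i * x) := by
  have hN₀ : N ≠ 0 := by
    rintro rfl
    have := Fintype.one_lt_card (α := F)
    omega
  have hord : orderOf (α ^ N) = (Fintype.card F - 1) / N := by
    rw [orderOf_pow_of_dvd hN₀ (hα ▸ hN), hα]
  rw [gaussPeriod, ← hord, ← sum_range_orderOf_pow_eq_sum_subgroup (isOfFinOrder_of_finite _) rfl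
    (fun x : Fˣ => psi p F ↑(α ^ i * x))]
  simp only [pow_add, pow_mul]

lemma gaussPeriod_add_mul (hα : orderOf α = Fintype.card F - 1) (hN : N ∣ Fintype.card F - 1)
    (i s : ℕ) : gaussPeriod p F α N (i + N * s) = gaussPeriod p F α N i := by
  rw [gaussPeriod_eq_sum_zpowers_s10 hα hN, gaussPeriod_eq_sum_zpowers_s10 hα hN, pow_add, pow_mul]
  exact sum_subgroup_mul_mul_of_mem (fun x : Fˣ => psi p F x) _ (pow_mem (mem_zpowers _) s)

lemma sum_range_orderOf_psi_mul_pow_eq_gaussPeriod (hα : orderOf α = Fintype.card F - 1)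
    (hN : N ∣ Fintype.card F - 1) {g : Fˣ} (hg : zpowers g = zpowers (α ^ N)) (i : ℕ) :
    ∑ t ∈ range (orderOf g), psi p F ↑(α ^ i * g ^ t) = gaussPeriod p F α N i := by
  rw [sum_range_orderOf_pow_eq_sum_subgroup (isOfFinOrder_of_finite g) hg
    (fun x : Fˣ => psi p F ↑(α ^ i * x)), gaussPeriod_eq_sum_zpowers_s10 hα hN]

end GaussPeriod

section FieldExtension

variable (K F : Type*) [Field K] [Fintype K] [Field F] [Fintype F] [Algebra K F]

lemma card_sub_one_dvd_card_sub_one : Fintype.card K - 1 ∣ Fintype.card F - 1 := by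
  simpa only [Nat.card_units, Nat.card_eq_fintype_card] using Subgroup.card_dvd_of_injective
    (Units.map (algebraMap K F).toMonoidHom) (Units.map_injective (algebraMap K F).injective)

variable {K F}

lemma orderOf_eq_card_sub_one_of_algebraMap_eq_pow {α : Fˣ} {β : Kˣ}
    (hα : orderOf α = Fintype.card F - 1)
    (hβ : algebraMap K F β = ((α ^ ((Fintype.card F - 1) / (Fintype.card K - 1)) : Fˣ) : F)) :
    orderOf β = Fintype.card K - 1 := by
  have hdvd := card_sub_one_dvd_card_sub_one K F
  have hF : Fintype.card F - 1 ≠ 0 := by have := Fintype.one_lt_card (α := F); omega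
  have hK : Fintype.card K - 1 ≠ 0 := by have := Fintype.one_lt_card (α := K); omega
  rw [← orderOf_injective _ (Units.map_injective (algebraMap K F).injective) β,
    show Units.map (algebraMap K F).toMonoidHom β = _ from Units.ext hβ,
    orderOf_pow_of_dvd (Nat.div_ne_zero_iff_of_dvd hdvd |>.2 ⟨hF, hK⟩)
      (by rw [hα]; exact Nat.div_dvd_of_dvd hdvd),
    hα, Nat.div_div_self hdvd hF]

end FieldExtension

lemma sum_units_sum_psi_mul_trace_eq_sum_gaussPeriod_mul (p : ℕ) [Fact p.Prime] {K F : Type*}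
    [Field K] [Fintype K] [DecidableEq K] [Algebra (ZMod p) K] [Field F] [Fintype F]
    [DecidableEq F] [Algebra (ZMod p) F] [Algebra K F] {α : Fˣ} {β : Kˣ} {g : Fˣ} {N₀ N₂ M : ℕ}
    (hα : orderOf α = Fintype.card F - 1) (hβ : orderOf β = Fintype.card K - 1)
    (hβα : algebraMap K F β = ((α ^ N₀ : Fˣ) : F)) (hg : zpowers g = zpowers (α ^ N₂))
    (hN₂ : N₂ ∣ Fintype.card F - 1) (hM : M ∣ Fintype.card K - 1) (hN₀M : N₂ ∣ N₀ * M)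
    {a b : F} {j l : ℕ} (hb : b ∈ cClass F α N₂ j) (ha : Algebra.trace K F a ∈ cClass K β M l) :
    ∑ y : Kˣ, ∑ t ∈ range (orderOf g), psi p K (y * Algebra.trace K F (a + b * (g : F) ^ t))
      = ∑ i ∈ range M, gaussPeriod p F α N₂ (N₀ * i + j) * gaussPeriod p K β M (i + l) := by
  obtain ⟨t₀, rfl⟩ := hb
  obtain ⟨s₀, hs₀⟩ := ha
  obtain ⟨c, hc⟩ := hN₀M
  have hβM : orderOf β = M * ((Fintype.card K - 1) / M) := by rw [Nat.mul_div_cancel' hM, hβ]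
  rw [sum_eq_sum_range_sum_range_pow (by rw [hβ, Nat.card_units, Nat.card_eq_fintype_card]) hβM]
  refine sum_congr rfl fun i _ => ?_
  have hF : ∀ u, ∑ t ∈ range (orderOf g),
      psi p F (algebraMap K F ↑(β ^ (i + M * u)) * (↑(α ^ (j + N₂ * t₀)) * (g : F) ^ t))
        = gaussPeriod p F α N₂ (N₀ * i + j) := by
    intro u
    rw [← gaussPeriod_add_mul hα hN₂ _ (c * u + t₀),
      ← sum_range_orderOf_psi_mul_pow_eq_gaussPeriod hα hN₂ hg]
    refine sum_congr rfl fun t _ => congrArg _ ?_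
    simp only [Units.val_pow_eq_pow_val, map_pow, hβα, Units.val_mul]
    rw [← pow_mul, ← mul_assoc, ← pow_add, mul_add N₀, ← mul_assoc, hc]
    ring
  simp only [psi_mul_trace_add, ← mul_sum, hF, ← sum_mul]
  rw [mul_comm]
  congr 1
  rw [← gaussPeriod_add_mul hβ hM (i + l) s₀, gaussPeriod]
  refine sum_congr rfl fun u _ => congrArg _ ?_
  rw [hs₀, ← Units.val_mul, ← pow_add]
  ring_nf

theorem stmt10_general (p : ℕ) [Fact p.Prime]
    (K F : Type*) [Field K] [Fintype K] [DecidableEq K] [Field F] [Fintype F]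
    [Algebra (ZMod p) K] [Algebra (ZMod p) F] [Algebra K F]
    (α : Fˣ) (hα : ∀ x : Fˣ, x ∈ Subgroup.zpowers α)
    (β : Kˣ)
    (hβ : algebraMap K F (β : K)
        = ((α ^ ((Fintype.card F - 1) / (Fintype.card K - 1)) : Fˣ) : F))
    (g₂ : Fˣ) (n₂ : ℕ) (h₂ : orderOf g₂ = n₂)
    (N₀ N₂ d₂ : ℕ)
    (hN₀ : N₀ = (Fintype.card F - 1) / (Fintype.card K - 1))
    (hN₂ : N₂ = (Fintype.card F - 1) / n₂)
    (hd₂ : d₂ = Nat.gcd N₀ N₂)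
    (a b : F) (j l : ℕ)
    (hb : b ∈ cClass F α N₂ j)
    (ha : Algebra.trace K F a ∈ cClass K β (N₂ / d₂) l) :
    (hammingNorm (fun t : Fin n₂ =>
        Algebra.trace K F (a + b * (g₂ : F) ^ (t : ℕ))) : ℂ)
      = ((Fintype.card K : ℂ) - 1) * (n₂ : ℂ) / (Fintype.card K : ℂ)
        - (1 / (Fintype.card K : ℂ))
          * ∑ i ∈ Finset.range (N₂ / d₂),
              gaussPeriod p F α N₂ (N₀ * i + j) * gaussPeriod p K β (N₂ / d₂) (i + l) := by
  classical
  have hαcard : orderOf α = Nat.card Fˣ := orderOf_eq_card_of_forall_mem_zpowers hα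
  have hα' : orderOf α = Fintype.card F - 1 := by
    rw [hαcard, Nat.card_units, Nat.card_eq_fintype_card]
  have hn₂ : n₂ ∣ orderOf α := h₂ ▸ hαcard ▸ orderOf_dvd_natCard g₂
  have hg₂ : zpowers g₂ = zpowers (α ^ N₂) := by
    rw [hN₂, ← hα', ← h₂]
    exact zpowers_eq_zpowers_pow_div_orderOf (orderOf_pos α).ne' (h₂ ▸ hn₂)
  have hN₂dvd : N₂ ∣ Fintype.card F - 1 := hN₂ ▸ Nat.div_dvd_of_dvd (hα' ▸ hn₂)
  have hN₀K : N₀ * (Fintype.card K - 1) = Fintype.card F - 1 :=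
    hN₀ ▸ Nat.div_mul_cancel (card_sub_one_dvd_card_sub_one K F)
  have hN₀pos : 0 < N₀ := Nat.pos_of_mul_pos_right (hN₀K ▸ hα' ▸ orderOf_pos α)
  have hS := sum_units_sum_psi_mul_trace_eq_sum_gaussPeriod_mul p hα'
    (orderOf_eq_card_sub_one_of_algebraMap_eq_pow hα' hβ) (hN₀ ▸ hβ) hg₂ hN₂dvd
    (hd₂ ▸ Nat.div_gcd_dvd_of_dvd_mul hN₀pos (hN₀K ▸ hN₂dvd)) (hd₂ ▸ Nat.dvd_mul_div_gcd N₀ N₂)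
    hb ha
  have hW := card_mul_hammingNorm (isPrimitive_psiChar p K)
    (fun t : Fin n₂ => Algebra.trace K F (a + b * (g₂ : F) ^ (t : ℕ)))
  rw [sum_comm, h₂] at hS
  simp only [psiChar_apply, Fintype.card_fin, Fin.sum_univ_eq_sum_range
    (fun t => ∑ y : Kˣ, psi p K (y * Algebra.trace K F (a + b * (g₂ : F) ^ t))), hS] at hW
  have hq : (Fintype.card K : ℂ) ≠ 0 := by simp
  field_simp
  linear_combination hW

/-- if `b ∈ C_j^{(N₂,r)}` and `Tr_{r/q}(a) ∈ C_l^{(N₂/d₂,q)}`, the weight of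
`c(a,b)` is `(q-1)n₂/q - (1/q) Σ_{i=0}^{N₂/d₂-1} η_{N₀i+j}^{(N₂,r)} η_{i+l}^{(N₂/d₂,q)}`. -/
theorem stmt10 (p s m : ℕ) [Fact p.Prime] (hs : 0 < s) (hm : 0 < m)
    (K F : Type*) [Field K] [Fintype K] [DecidableEq K] [Field F] [Fintype F]
    [Algebra (ZMod p) K] [Algebra (ZMod p) F] [Algebra K F]
    (hq : Fintype.card K = p ^ s) (hr : Fintype.card F = Fintype.card K ^ m)
    (α : Fˣ) (hα : ∀ x : Fˣ, x ∈ Subgroup.zpowers α)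
    (β : Kˣ)
    (hβ : algebraMap K F (β : K)
        = ((α ^ ((Fintype.card F - 1) / (Fintype.card K - 1)) : Fˣ) : F))
    (g₂ : Fˣ) (n₂ : ℕ) (h₂ : orderOf g₂ = n₂)
    (N₀ N₂ d₂ : ℕ)
    (hN₀ : N₀ = (Fintype.card F - 1) / (Fintype.card K - 1))
    (hN₂ : N₂ = (Fintype.card F - 1) / n₂)
    (hd₂ : d₂ = Nat.gcd N₀ N₂)
    (a b : F) (j l : ℕ) (hj : j < N₂) (hl : l < N₂ / d₂)
    (hb : b ∈ cClass F α N₂ j)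
    (ha : Algebra.trace K F a ∈ cClass K β (N₂ / d₂) l) :
    (hammingNorm (fun t : Fin n₂ =>
        Algebra.trace K F (a + b * (g₂ : F) ^ (t : ℕ))) : ℂ)
      = ((Fintype.card K : ℂ) - 1) * (n₂ : ℂ) / (Fintype.card K : ℂ)
        - (1 / (Fintype.card K : ℂ))
          * ∑ i ∈ Finset.range (N₂ / d₂),
              gaussPeriod p F α N₂ (N₀ * i + j) * gaussPeriod p K β (N₂ / d₂) (i + l) :=
  stmt10_general p K F α hα β hβ g₂ n₂ h₂ N₀ N₂ d₂ hN₀ hN₂ hd₂ a b j l hb ha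
end
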